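/- The 3-player zero-sum game H5 on actions {1,2}, with payoff vectors (Player 1 selects matrix, Player 2 row, Player 3 column): matrix 1: (1,1)→(−4,2,2), (1,2)→(−2,1,1), (2,1)→(−2,1,1), (2,2)→(0,0,0); matrix 2: (1,1)→(0,0,0), (1,2)→(−2,1,1), (2,1)→(−2,1,1), (2,2)→(−6,3,3), has a unique Nash equilibrium, in which Player 1 plays action 1 with probability 1 − 1/√6 and Players 2 and 3 each play action 1 with probability 3 − √6; the equilibrium payoff profile is (−4(3−√6), 2(3−√6), 2(3−√6)). -/

import Mathlib

open Set

/-- Expected payoff in a 3-player game where each player has two actions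
(`true` = action 1, `false` = action 2), given the probabilities `p q r` of
playing action 1. -/
noncomputable def exp3 (f : Bool → Bool → Bool → ℝ) (p q r : ℝ) : ℝ :=
  p*q*r * f true true true + p*q*(1-r) * f true true false +
  p*(1-q)*r * f true false true + p*(1-q)*(1-r) * f true false false +
  (1-p)*q*r * f false true true + (1-p)*q*(1-r) * f false true false +
  (1-p)*(1-q)*r * f false false true + (1-p)*(1-q)*(1-r) * f false false false

/-- Payoff to player `i` in the 3-player zero-sum game H5; `true` = action 1. -/
noncomputable def H5 (i : Fin 3) (a b c : Bool) : ℝ :=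
  match a, b, c with
  | true,  true,  true  => ![-4, 2, 2] i
  | true,  true,  false => ![-2, 1, 1] i
  | true,  false, true  => ![-2, 1, 1] i
  | true,  false, false => ![0, 0, 0] i
  | false, true,  true  => ![0, 0, 0] i
  | false, true,  false => ![-2, 1, 1] i
  | false, false, true  => ![-2, 1, 1] i
  | false, false, false => ![-6, 3, 3] i

/-- `(p,q,r)` is a (mixed) Nash equilibrium of H5. -/
def H5NE (p q r : ℝ) : Prop :=
  p ∈ Icc (0:ℝ) 1 ∧ q ∈ Icc (0:ℝ) 1 ∧ r ∈ Icc (0:ℝ) 1 ∧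
  (∀ p' ∈ Icc (0:ℝ) 1, exp3 (H5 0) p' q r ≤ exp3 (H5 0) p q r) ∧
  (∀ q' ∈ Icc (0:ℝ) 1, exp3 (H5 1) p q' r ≤ exp3 (H5 1) p q r) ∧
  (∀ r' ∈ Icc (0:ℝ) 1, exp3 (H5 2) p q r' ≤ exp3 (H5 2) p q r)

/-!
Each expected payoff is affine in the player's own probability, so a strategy is a best reply
exactly when it puts all weight on the action with positive gain, and is unrestricted when the
gain vanishes. The two pure strategies of Player 1 are each ruled out by a chain of forced best
replies, so Player 1 mixes and their gain `6 - 6q - 6r + 2qr` vanishes; this rules out pure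
strategies of Players 2 and 3 too. With everybody mixing, all three gains vanish: the gains of
Players 2 and 3 force `q = r`, and then `q² - 6q + 3 = 0` and `p (3 - q) = 2 - q`.
-/

/-- `p` maximizes `x ↦ x * a + b` on `[0, 1]`. -/
def BestReply (a p : ℝ) : Prop :=
  p ∈ Icc (0:ℝ) 1 ∧ (0 < a → p = 1) ∧ (a < 0 → p = 0)

theorem bestReply_iff {a p : ℝ} (b : ℝ) :
    BestReply a p ↔ p ∈ Icc (0:ℝ) 1 ∧ ∀ x ∈ Icc (0:ℝ) 1, x * a + b ≤ p * a + b := by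
  refine and_congr_right fun ⟨hp0, hp1⟩ => ⟨?_, fun h => ⟨fun ha => ?_, fun ha => ?_⟩⟩
  · rintro ⟨hpos, hneg⟩ x ⟨hx0, hx1⟩
    rcases lt_trichotomy a 0 with ha | rfl | ha
    · rw [hneg ha]; nlinarith
    · simp
    · rw [hpos ha]; nlinarith
  · have := h 1 ⟨zero_le_one, le_rfl⟩; nlinarith
  · have := h 0 ⟨le_rfl, zero_le_one⟩; nlinarith

theorem bestReply_zero_iff {p : ℝ} : BestReply 0 p ↔ p ∈ Icc (0:ℝ) 1 := by
  simp [BestReply]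

namespace BestReply

variable {a p : ℝ}

theorem nonneg_of_pos (h : BestReply a p) (hp : 0 < p) : 0 ≤ a :=
  not_lt.mp fun ha => hp.ne' (h.2.2 ha)

theorem nonpos_of_lt_one (h : BestReply a p) (hp : p < 1) : a ≤ 0 :=
  not_lt.mp fun ha => hp.ne (h.2.1 ha)

theorem eq_zero (h : BestReply a p) (hp0 : 0 < p) (hp1 : p < 1) : a = 0 :=
  le_antisymm (h.nonpos_of_lt_one hp1) (h.nonneg_of_pos hp0)

end BestReply

/-- Gain of Player 1 from action 1 over action 2. -/
def gain0 (q r : ℝ) : ℝ := 6 - 6*q - 6*r + 2*q*r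

/-- Gain of Player 2 (resp. 3) from action 1 over action 2, `s` being the probability of
action 1 of Player 3 (resp. 2). -/
def gain12 (p s : ℝ) : ℝ := 3*p + s - p*s - 2

theorem gain0_comm (q r : ℝ) : gain0 q r = gain0 r q := by
  unfold gain0; ring

theorem exp3_H5_zero (p q r : ℝ) :
    exp3 (H5 0) p q r = p * gain0 q r + (4*q + 4*r - 2*q*r - 6) := by
  simp only [exp3, H5, gain0, Matrix.cons_val_zero]; ring

theorem exp3_H5_one (p q r : ℝ) :
    exp3 (H5 1) p q r = q * gain12 p r + (3 - 3*p + 3*p*r - 2*r) := by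
  simp only [exp3, H5, gain12, Matrix.cons_val_one, Matrix.cons_val_zero]; ring

theorem exp3_H5_two (p q r : ℝ) :
    exp3 (H5 2) p q r = r * gain12 p q + (3 - 3*p + 3*p*q - 2*q) := by
  simp only [exp3, H5, gain12, Fin.isValue, Matrix.cons_val]; ring

theorem H5NE_iff (p q r : ℝ) :
    H5NE p q r ↔
      BestReply (gain0 q r) p ∧ BestReply (gain12 p r) q ∧ BestReply (gain12 p q) r := by
  rw [bestReply_iff (4*q + 4*r - 2*q*r - 6), bestReply_iff (3 - 3*p + 3*p*r - 2*r),
    bestReply_iff (3 - 3*p + 3*p*q - 2*q)]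
  simp only [H5NE, exp3_H5_zero, exp3_H5_one, exp3_H5_two]
  tauto

namespace H5NE

variable {p q r : ℝ}

theorem swap (h : H5NE p q r) : H5NE p r q := by
  rw [H5NE_iff] at h ⊢
  rw [gain0_comm]
  exact ⟨h.1, h.2.2, h.2.1⟩

theorem pos_left (h : H5NE p q r) : 0 < p := by
  rw [H5NE_iff] at h
  obtain ⟨hp, hq, hr⟩ := h
  refine lt_of_le_of_ne hp.1.1 fun hp0 => ?_
  subst hp0
  have hq0 : q = 0 := hq.2.2 (by unfold gain12; linarith [hr.1.2])
  have hr0 : r = 0 := hr.2.2 (by unfold gain12; linarith [hq.1.2])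
  subst hq0 hr0
  exact zero_ne_one (hp.2.1 (by norm_num [gain0]))

theorem lt_one_left (h : H5NE p q r) : p < 1 := by
  rw [H5NE_iff] at h
  obtain ⟨hp, hq, hr⟩ := h
  refine lt_of_le_of_ne hp.1.2 fun hp1 => ?_
  subst hp1
  have hq1 : q = 1 := hq.2.1 (by norm_num [gain12])
  have hr1 : r = 1 := hr.2.1 (by norm_num [gain12])
  subst hq1 hr1
  exact one_ne_zero (hp.2.2 (by norm_num [gain0]))

theorem gain0_eq_zero (h : H5NE p q r) : gain0 q r = 0 :=
  ((H5NE_iff p q r).mp h).1.eq_zero h.pos_left h.lt_one_left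

/-- If Player 2 plays purely, Player 1's indifference forces Player 3 to play the other action,
and the best replies of Players 2 and 3 then demand `p ≤ 1/2` and `p ≥ 2/3`. -/
theorem pos_mid (h : H5NE p q r) : 0 < q := by
  have h0 := h.gain0_eq_zero
  obtain ⟨-, hq, hr⟩ := (H5NE_iff p q r).mp h
  refine lt_of_le_of_ne hq.1.1 fun hq0 => ?_
  subst hq0
  have hr1 : r = 1 := by unfold gain0 at h0; linarith
  subst hr1
  have := hq.nonpos_of_lt_one one_pos
  have := hr.nonneg_of_pos one_pos
  unfold gain12 at *; linarith

theorem lt_one_mid (h : H5NE p q r) : q < 1 := by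
  have h0 := h.gain0_eq_zero
  obtain ⟨-, hq, hr⟩ := (H5NE_iff p q r).mp h
  refine lt_of_le_of_ne hq.1.2 fun hq1 => ?_
  subst hq1
  have hr0 : r = 0 := by unfold gain0 at h0; linarith
  subst hr0
  have := hq.nonneg_of_pos one_pos
  have := hr.nonpos_of_lt_one one_pos
  unfold gain12 at *; linarith

theorem gain12_eq_zero (h : H5NE p q r) : gain12 p r = 0 :=
  ((H5NE_iff p q r).mp h).2.1.eq_zero h.pos_mid h.lt_one_mid

end H5NE

theorem eq_of_gains_eq_zero {p q r : ℝ} (hp : p < 1) (hr : r < 1) (h0 : gain0 q r = 0)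
    (h1 : gain12 p r = 0) (h2 : gain12 p q = 0) :
    p = 1 - 1 / Real.sqrt 6 ∧ q = 3 - Real.sqrt 6 ∧ r = 3 - Real.sqrt 6 := by
  unfold gain0 gain12 at *
  have hs : Real.sqrt 6 ^ 2 = 6 := Real.sq_sqrt (by norm_num)
  have hs0 : 0 < Real.sqrt 6 := by positivity
  have hqr : q = r := by
    have : (r - q) * (1 - p) = 0 := by linear_combination h1 - h2
    rcases mul_eq_zero.mp this with h | h <;> linarith
  subst hqr
  have hq : q = 3 - Real.sqrt 6 := by
    have : (q - (3 - Real.sqrt 6)) * (q - (3 + Real.sqrt 6)) = 0 := by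
      linear_combination h0 / 2 - hs
    rcases mul_eq_zero.mp this with h | h <;> linarith
  subst hq
  refine ⟨?_, rfl, rfl⟩
  field_simp
  linear_combination h2

theorem H5NE_of_eq {p q r : ℝ} (hp : p = 1 - 1 / Real.sqrt 6) (hq : q = 3 - Real.sqrt 6)
    (hr : r = 3 - Real.sqrt 6) : H5NE p q r := by
  obtain rfl : r = q := hr.trans hq.symm
  have hs : Real.sqrt 6 ^ 2 = 6 := Real.sq_sqrt (by norm_num)
  have hs2 : 2 < Real.sqrt 6 := by nlinarith [Real.sqrt_nonneg 6]
  have hs3 : Real.sqrt 6 < 3 := by nlinarith [Real.sqrt_nonneg 6]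
  have hgain0 : gain0 r r = 0 := by
    subst hq; unfold gain0; linear_combination 2 * hs
  have hgain12 : gain12 p r = 0 := by
    subst hp hq; unfold gain12; field_simp; ring
  have hp_mem : p ∈ Icc (0:ℝ) 1 := by
    subst hp
    have : 1 / Real.sqrt 6 ≤ 1 := (div_le_one (by linarith)).mpr (by linarith)
    exact ⟨by linarith, by linarith [show 0 < 1 / Real.sqrt 6 by positivity]⟩
  have hr_mem : r ∈ Icc (0:ℝ) 1 := by subst hq; constructor <;> linarith
  rw [H5NE_iff, hgain0, hgain12, bestReply_zero_iff, bestReply_zero_iff]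
  exact ⟨hp_mem, hr_mem, hr_mem⟩

/-- The unique Nash equilibrium of H5 has Player 1 playing action 1 with
probability 1 − 1/√6 and Players 2 and 3 playing action 1 with probability
3 − √6; the equilibrium payoff profile is (−4(3−√6), 2(3−√6), 2(3−√6)). -/
theorem stmt9 :
    (∀ p q r : ℝ, H5NE p q r ↔
      p = 1 - 1 / Real.sqrt 6 ∧ q = 3 - Real.sqrt 6 ∧ r = 3 - Real.sqrt 6) ∧
    exp3 (H5 0) (1 - 1 / Real.sqrt 6) (3 - Real.sqrt 6) (3 - Real.sqrt 6)
      = -4 * (3 - Real.sqrt 6) ∧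
    exp3 (H5 1) (1 - 1 / Real.sqrt 6) (3 - Real.sqrt 6) (3 - Real.sqrt 6)
      = 2 * (3 - Real.sqrt 6) ∧
    exp3 (H5 2) (1 - 1 / Real.sqrt 6) (3 - Real.sqrt 6) (3 - Real.sqrt 6)
      = 2 * (3 - Real.sqrt 6) := by
  have hs : Real.sqrt 6 ^ 2 = 6 := Real.sq_sqrt (by norm_num)
  have hs0 : Real.sqrt 6 ≠ 0 := by positivity
  refine ⟨fun p q r => ⟨fun h => ?_, fun ⟨hp, hq, hr⟩ => H5NE_of_eq hp hq hr⟩, ?_, ?_, ?_⟩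
  · exact eq_of_gains_eq_zero h.lt_one_left h.swap.lt_one_mid h.gain0_eq_zero
      h.gain12_eq_zero h.swap.gain12_eq_zero
  · rw [exp3_H5_zero]; unfold gain0; field_simp; linear_combination (-2) * hs
  · rw [exp3_H5_one]; unfold gain12; field_simp; linear_combination hs
  · rw [exp3_H5_two]; unfold gain12; field_simp; linear_combination hs
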